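/- Let E be an N×n real matrix with ‖E‖ ≤ 2(√N + √n), let b ≥ 2, and let z ∈ ℂ with |z| ≥ 2b(√N + √n). Then zI − ℰ is invertible, ‖G(z)‖ ≤ (b/(b−1))·(1/|z|), and (1 − 1/(4b(b−1)))·|z| ≤ |φ_i(z)| ≤ (1 + 1/(4b(b−1)))·|z| for i = 1, 2. -/

import Mathlib

open MeasureTheory ProbabilityTheory Matrix

noncomputable section

/-- ℓ²→ℓ² operator (spectral) norm of a real matrix. -/
def opNorm {m n : Type*} [Fintype m] [Fintype n] [DecidableEq n]
    (M : Matrix m n ℝ) : ℝ :=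
  ‖LinearMap.toContinuousLinearMap (Matrix.toEuclideanLin M)‖

/-- ℓ²→ℓ² operator (spectral) norm of a complex matrix. -/
def opNormC {m n : Type*} [Fintype m] [Fintype n] [DecidableEq n]
    (M : Matrix m n ℂ) : ℝ :=
  ‖LinearMap.toContinuousLinearMap (Matrix.toEuclideanLin M)‖

/-- Euclidean norm of a finitely indexed real vector. -/
def vnorm {n : Type*} [Fintype n] (x : n → ℝ) : ℝ :=
  Real.sqrt (∑ i, (x i) ^ 2)

/-- `‖M‖_{2,∞}`: the maximum Euclidean norm of the rows of `M`. -/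
def twoInf {m n : Type*} [Fintype m] [Fintype n] (M : Matrix m n ℝ) : ℝ :=
  ⨆ i, vnorm (M i)

/-- The diagonal matrix `diag (σ 1, …, σ m)` built from a 1-indexed sequence `σ`. -/
def sdiag {m : ℕ} (σ : ℕ → ℝ) : Matrix (Fin m) (Fin m) ℝ :=
  Matrix.of fun i j => if i = j then σ ((i : ℕ) + 1) else 0

/-- Orthogonal projection `W_{k,s} W_{k,s}ᵀ` onto the span of the (1-indexed)
columns `k,…,s` of `W`. -/
def projSlice {N m : ℕ} (W : Matrix (Fin N) (Fin m) ℝ) (k s : ℕ) :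
    Matrix (Fin N) (Fin N) ℝ :=
  Matrix.of fun a b =>
    ∑ j : Fin m, if k ≤ (j : ℕ) + 1 ∧ (j : ℕ) + 1 ≤ s then W a j * W b j else 0

/-- `‖·‖_{2,∞}` of the submatrix of `M` given by the (1-indexed) columns `k,…,s`. -/
def sliceTwoInf {N m : ℕ} (M : Matrix (Fin N) (Fin m) ℝ) (k s : ℕ) : ℝ :=
  ⨆ a, Real.sqrt (∑ j : Fin m,
    if k ≤ (j : ℕ) + 1 ∧ (j : ℕ) + 1 ≤ s then (M a j) ^ 2 else 0)

/-- `η = (11 b²/(b−1)²) √(2 (log 9) r + (K+7) log(N+n))`. -/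
def eta (N n r : ℕ) (K b : ℝ) : ℝ :=
  11 * b ^ 2 / (b - 1) ^ 2 *
    Real.sqrt (2 * Real.log 9 * r + (K + 7) * Real.log ((N : ℝ) + n))

/-- `χ(b) = 1 + 1/(4b(b−1))`. -/
def chi (b : ℝ) : ℝ := 1 + 1 / (4 * b * (b - 1))

/-- `ξ(b) = 1 + 1/(2(b−1)²)`. -/
def xib (b : ℝ) : ℝ := 1 + 1 / (2 * (b - 1) ^ 2)

/-- `γ = (9 b²/(b−1)²) √(r (K+7) log(N+n))`. -/
def gam (N n r : ℕ) (K b : ℝ) : ℝ :=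
  9 * b ^ 2 / (b - 1) ^ 2 *
    Real.sqrt ((r : ℝ) * (K + 7) * Real.log ((N : ℝ) + n))

/-- `min {δ_{k-1}, δ_s}` where `δ_j = σ_j − σ_{j+1}` (1-indexed) and `δ_0 = ∞`
(so for `k = 1` the minimum is just `δ_s`). -/
def dmin (σ : ℕ → ℝ) (k s : ℕ) : ℝ :=
  if k = 1 then σ s - σ (s + 1) else min (σ (k - 1) - σ k) (σ s - σ (s + 1))

/-- The symmetric dilation `ℰ = [[0, E], [Eᵀ, 0]]` of a rectangular matrix `E`. -/
def dil {N n : ℕ} (E : Matrix (Fin N) (Fin n) ℝ) :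
    Matrix (Fin N ⊕ Fin n) (Fin N ⊕ Fin n) ℝ :=
  Matrix.fromBlocks 0 E Eᵀ 0

/-- Complex resolvent `G(z) = (z I − ℰ)⁻¹` of the dilation. -/
def resolvC {N n : ℕ} (z : ℂ) (E : Matrix (Fin N) (Fin n) ℝ) :
    Matrix (Fin N ⊕ Fin n) (Fin N ⊕ Fin n) ℂ :=
  (z • (1 : Matrix (Fin N ⊕ Fin n) (Fin N ⊕ Fin n) ℂ) -
      (dil E).map (Complex.ofReal))⁻¹

/-- `φ₁(z) = z − ∑_{t=N+1}^{N+n} G(z)_{tt}` (complex version). -/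
def phi1C {N n : ℕ} (z : ℂ) (E : Matrix (Fin N) (Fin n) ℝ) : ℂ :=
  z - ∑ t : Fin n, resolvC z E (Sum.inr t) (Sum.inr t)

/-- `φ₂(z) = z − ∑_{t=1}^{N} G(z)_{tt}` (complex version). -/
def phi2C {N n : ℕ} (z : ℂ) (E : Matrix (Fin N) (Fin n) ℝ) : ℂ :=
  z - ∑ t : Fin N, resolvC z E (Sum.inl t) (Sum.inl t)

/-- Real resolvent `G(z) = (z I − ℰ)⁻¹` of the dilation, for real `z`. -/
def resolvR {N n : ℕ} (z : ℝ) (E : Matrix (Fin N) (Fin n) ℝ) :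
    Matrix (Fin N ⊕ Fin n) (Fin N ⊕ Fin n) ℝ :=
  (z • (1 : Matrix (Fin N ⊕ Fin n) (Fin N ⊕ Fin n) ℝ) - dil E)⁻¹

/-- `φ₁(z)` for real `z` (equals the complex version at a real point). -/
def phi1R {N n : ℕ} (z : ℝ) (E : Matrix (Fin N) (Fin n) ℝ) : ℝ :=
  z - ∑ t : Fin n, resolvR z E (Sum.inr t) (Sum.inr t)

/-- `φ₂(z)` for real `z` (equals the complex version at a real point). -/
def phi2R {N n : ℕ} (z : ℝ) (E : Matrix (Fin N) (Fin n) ℝ) : ℝ :=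
  z - ∑ t : Fin N, resolvR z E (Sum.inl t) (Sum.inl t)

/-- `Φ(z)`: diagonal matrix whose first `N` diagonal entries are `1/φ₁(z)` and whose
last `n` diagonal entries are `1/φ₂(z)`. -/
def PhiC {N n : ℕ} (z : ℂ) (E : Matrix (Fin N) (Fin n) ℝ) :
    Matrix (Fin N ⊕ Fin n) (Fin N ⊕ Fin n) ℂ :=
  Matrix.of fun p q =>
    if p = q then Sum.elim (fun _ => (phi1C z E)⁻¹) (fun _ => (phi2C z E)⁻¹) p else 0

/-- The `(N+n) × 2r` matrix `𝒰` of eigenvectors of the dilation of `A = U D Vᵀ`. -/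
def calU {N n r : ℕ} (U : Matrix (Fin N) (Fin r) ℝ) (V : Matrix (Fin n) (Fin r) ℝ) :
    Matrix (Fin N ⊕ Fin n) (Fin r ⊕ Fin r) ℝ :=
  Matrix.fromBlocks ((Real.sqrt 2)⁻¹ • U) ((Real.sqrt 2)⁻¹ • U)
    ((Real.sqrt 2)⁻¹ • V) (-((Real.sqrt 2)⁻¹ • V))

/-- Schatten `p`-norm: `(∑ᵢ sᵢ(M)ᵖ)^{1/p}`, where the singular values `sᵢ(M)` are the
square roots of the eigenvalues of `Mᴴ M`. -/
def schatten (p : ℝ) {m r : ℕ} (M : Matrix (Fin m) (Fin r) ℝ) : ℝ :=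
  (∑ i, Real.sqrt ((show (Mᵀ * M).IsHermitian by
    rw [← Matrix.conjTranspose_eq_transpose_of_trivial]; exact Matrix.isHermitian_conjTranspose_mul_self M).eigenvalues i) ^ p) ^ (1 / p)

/-!
Let `s = √N + √n`, `r = ‖z‖`, and write `ℰ` also for the complexified dilation, so that
`‖ℰ‖ = ‖E‖ ≤ 2s ≤ r / b`. The Neumann series `z⁻¹ ∑ (ℰ / z)ᵏ` inverts `z - ℰ` and gives
`‖G(z)‖ ≤ (r - ‖ℰ‖)⁻¹ ≤ b / ((b - 1) r)`.

For the `φᵢ`, expand the resolvent twice: `z² G = z + ℰ + G ℰ²`. Since `ℰ` has zero diagonal,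
`z² G_tt - z` is a diagonal entry of `G ℰ²`, hence at most `‖G‖ ‖ℰ‖² ≤ 4 b s² / ((b - 1) r)`.
Summing over one block of at most `s² ≤ r² / (4 b²)` indices gives
`|∑ G_tt| ≤ r / (4 b (b - 1))`, and `φᵢ = z - ∑ G_tt`.
-/

theorem exists_inverse_smul_one_sub_of_norm_lt {𝕜 A : Type*} [NontriviallyNormedField 𝕜]
    [NormedRing A] [NormOneClass A] [NormedAlgebra 𝕜 A] [CompleteSpace A] {a : A} {z : 𝕜}
    (h : ‖a‖ < ‖z‖) :
    ∃ B : A, (z • 1 - a) * B = 1 ∧ B * (z • 1 - a) = 1 ∧ ‖B‖ ≤ (‖z‖ - ‖a‖)⁻¹ := by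
  have hz : 0 < ‖z‖ := (norm_nonneg a).trans_lt h
  have hz' : z ≠ 0 := norm_pos_iff.mp hz
  set t := z⁻¹ • a
  have ht : ‖t‖ < 1 := by
    rwa [norm_smul, norm_inv, inv_mul_lt_iff₀ hz, mul_one]
  have hfac : z • 1 - a = z • (1 - t) := by
    rw [smul_sub, smul_smul, mul_inv_cancel₀ hz', one_smul]
  refine ⟨z⁻¹ • ∑' i, t ^ i, ?_, ?_, ?_⟩
  · rw [hfac, smul_mul_smul_comm, mul_inv_cancel₀ hz', one_smul, mul_neg_geom_series t ht]
  · rw [hfac, smul_mul_smul_comm, inv_mul_cancel₀ hz', one_smul, geom_series_mul_neg t ht]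
  · have hS := tsum_geometric_le_of_norm_lt_one t ht
    rw [norm_one, sub_self, zero_add] at hS
    calc ‖z⁻¹ • ∑' i, t ^ i‖ ≤ ‖z‖⁻¹ * (1 - ‖t‖)⁻¹ := by
          rw [norm_smul, norm_inv]; gcongr
      _ = (‖z‖ - ‖a‖)⁻¹ := by
          rw [norm_smul, norm_inv, ← mul_inv, mul_sub, mul_one, mul_inv_cancel_left₀ hz.ne']

theorem sq_smul_eq_of_mul_smul_one_sub_eq_one {R A : Type*} [CommRing R] [Ring A] [Algebra R A]
    {z : R} {a G : A} (h : G * (z • 1 - a) = 1) : z ^ 2 • G = z • 1 + a + G * a * a := by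
  have hGa : G * a = z • G - 1 := by
    rw [← h, mul_sub, mul_smul_comm, mul_one, sub_sub_cancel]
  rw [hGa, sub_mul, smul_mul_assoc, hGa, one_mul, smul_sub, smul_smul, ← sq]
  abel

theorem norm_sub_bounds_of_norm_le_mul {E : Type*} [SeminormedAddCommGroup E] {u v : E} {ε : ℝ}
    (h : ‖v‖ ≤ ε * ‖u‖) : (1 - ε) * ‖u‖ ≤ ‖u - v‖ ∧ ‖u - v‖ ≤ (1 + ε) * ‖u‖ :=
  ⟨by linarith [norm_sub_norm_le u v], by linarith [norm_sub_le u v]⟩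

open scoped Matrix.Norms.L2Operator

namespace Matrix

variable {𝕜 : Type*} [RCLike 𝕜] {m n p ι : Type*} [Fintype m] [Fintype n] [DecidableEq n]
  [Fintype p] [DecidableEq p] [Fintype ι]

theorem l2_opNorm_le_of_mulVec {A : Matrix m n 𝕜} {K : ℝ} (hK : 0 ≤ K)
    (h : ∀ x : EuclideanSpace 𝕜 n, ‖(EuclideanSpace.equiv m 𝕜).symm (A *ᵥ x)‖ ≤ K * ‖x‖) :
    ‖A‖ ≤ K := by
  rw [l2_opNorm_def]
  exact ContinuousLinearMap.opNorm_le_bound _ hK h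

theorem norm_entry_le_l2_opNorm (A : Matrix m n 𝕜) (i : m) (j : n) : ‖A i j‖ ≤ ‖A‖ :=
  calc ‖A i j‖ = ‖(EuclideanSpace.equiv m 𝕜).symm (A *ᵥ EuclideanSpace.single j 1) i‖ := by
        simp [mulVec_single]
    _ ≤ ‖(EuclideanSpace.equiv m 𝕜).symm (A *ᵥ EuclideanSpace.single j 1)‖ :=
        PiLp.norm_apply_le _ _
    _ ≤ ‖A‖ := by simpa using A.l2_opNorm_mulVec (EuclideanSpace.single j 1)

theorem l2_opNorm_fromBlocks_zero_le [DecidableEq m] (B : Matrix m n 𝕜) (C : Matrix n m 𝕜) :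
    ‖fromBlocks 0 B C 0‖ ≤ max ‖B‖ ‖C‖ := by
  have hK : 0 ≤ max ‖B‖ ‖C‖ := le_max_of_le_left (norm_nonneg _)
  refine l2_opNorm_le_of_mulVec hK fun x => ?_
  set x₁ : EuclideanSpace 𝕜 m := WithLp.toLp 2 fun i => x (Sum.inl i)
  set x₂ : EuclideanSpace 𝕜 n := WithLp.toLp 2 fun i => x (Sum.inr i)
  have hx : ‖x‖ ^ 2 = ‖x₁‖ ^ 2 + ‖x₂‖ ^ 2 := by
    simp only [PiLp.norm_sq_eq_of_L2, Fintype.sum_sum_type, x₁, x₂]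
  have hy : ‖(EuclideanSpace.equiv (m ⊕ n) 𝕜).symm (fromBlocks 0 B C 0 *ᵥ x)‖ ^ 2
      = ‖(EuclideanSpace.equiv m 𝕜).symm (B *ᵥ x₂)‖ ^ 2
        + ‖(EuclideanSpace.equiv n 𝕜).symm (C *ᵥ x₁)‖ ^ 2 := by
    simp [PiLp.norm_sq_eq_of_L2, Fintype.sum_sum_type, fromBlocks_mulVec, x₁, x₂,
      Function.comp_def]
  have h₁ := (B.l2_opNorm_mulVec x₂).trans
    (mul_le_mul_of_nonneg_right (le_max_left _ ‖C‖) (norm_nonneg _))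
  have h₂ := (C.l2_opNorm_mulVec x₁).trans
    (mul_le_mul_of_nonneg_right (le_max_right ‖B‖ _) (norm_nonneg _))
  refine le_of_sq_le_sq ?_ (by positivity)
  rw [hy, mul_pow, hx]
  nlinarith [norm_nonneg ((EuclideanSpace.equiv m 𝕜).symm (B *ᵥ x₂)),
    norm_nonneg ((EuclideanSpace.equiv n 𝕜).symm (C *ᵥ x₁))]

theorem l2_opNorm_dil_le {N n : ℕ} (E : Matrix (Fin N) (Fin n) ℝ) : ‖dil E‖ ≤ ‖E‖ :=
  (l2_opNorm_fromBlocks_zero_le E Eᵀ).trans <| by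
    rw [← conjTranspose_eq_transpose_of_trivial, l2_opNorm_conjTranspose, max_self]

theorem l2_opNorm_map_ofReal_le (A : Matrix m n ℝ) :
    ‖A.map Complex.ofReal‖ ≤ ‖A‖ := by
  refine l2_opNorm_le_of_mulVec (norm_nonneg _) fun x => ?_
  set u : EuclideanSpace ℝ n := WithLp.toLp 2 fun i => (x i).re
  set v : EuclideanSpace ℝ n := WithLp.toLp 2 fun i => (x i).im
  have hx : ‖x‖ ^ 2 = ‖u‖ ^ 2 + ‖v‖ ^ 2 := by
    simp only [PiLp.norm_sq_eq_of_L2, ← Finset.sum_add_distrib, u, v, Complex.sq_norm,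
      Complex.normSq_apply, Real.norm_eq_abs, sq_abs]
    exact Finset.sum_congr rfl fun i _ => by ring
  have hy : ‖(EuclideanSpace.equiv m ℂ).symm (A.map Complex.ofReal *ᵥ x)‖ ^ 2
      = ‖(EuclideanSpace.equiv m ℝ).symm (A *ᵥ u)‖ ^ 2
        + ‖(EuclideanSpace.equiv m ℝ).symm (A *ᵥ v)‖ ^ 2 := by
    simp only [PiLp.norm_sq_eq_of_L2, ← Finset.sum_add_distrib]
    refine Finset.sum_congr rfl fun j _ => ?_
    simp only [PiLp.continuousLinearEquiv_symm_apply, mulVec, dotProduct, map_apply,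
      Complex.sq_norm, Complex.normSq_apply, Complex.re_sum, Complex.mul_re, Complex.ofReal_re,
      Complex.ofReal_im, zero_mul, sub_zero, Complex.im_sum, Complex.mul_im, add_zero,
      Real.norm_eq_abs, sq_abs, u, v]
    ring
  have hu := A.l2_opNorm_mulVec u
  have hv := A.l2_opNorm_mulVec v
  refine le_of_sq_le_sq ?_ (by positivity)
  rw [hy, mul_pow, hx]
  nlinarith [norm_nonneg ((EuclideanSpace.equiv m ℝ).symm (A *ᵥ u)),
    norm_nonneg ((EuclideanSpace.equiv m ℝ).symm (A *ᵥ v))]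

theorem isUnit_smul_one_sub_and_l2_opNorm_inv_le [Nonempty p] {a : Matrix p p 𝕜} {z : 𝕜}
    (h : ‖a‖ < ‖z‖) : IsUnit (z • 1 - a) ∧ ‖(z • 1 - a)⁻¹‖ ≤ (‖z‖ - ‖a‖)⁻¹ := by
  obtain ⟨B, hAB, hBA, hB⟩ := exists_inverse_smul_one_sub_of_norm_lt h
  exact ⟨⟨⟨_, B, hAB, hBA⟩, rfl⟩, by rwa [inv_eq_right_inv hAB]⟩

theorem norm_sum_diag_le_of_mul_smul_one_sub_eq_one {a G : Matrix p p 𝕜} {z : 𝕜}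
    (hG : G * (z • 1 - a) = 1) (ha : ∀ i, a i i = 0) (f : ι → p) :
    ‖z‖ ^ 2 * ‖∑ i, G (f i) (f i)‖ ≤ Fintype.card ι * (‖z‖ + ‖G‖ * ‖a‖ ^ 2) := by
  have hdiag : ∀ i, z ^ 2 * G i i = z + (G * a * a) i i := fun i => by
    simpa [ha i] using congr($(sq_smul_eq_of_mul_smul_one_sub_eq_one hG) i i)
  have hGaa : ‖G * a * a‖ ≤ ‖G‖ * ‖a‖ ^ 2 := by
    rw [sq, ← mul_assoc]
    exact (norm_mul_le _ _).trans (mul_le_mul_of_nonneg_right (norm_mul_le _ _) (norm_nonneg _))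
  calc ‖z‖ ^ 2 * ‖∑ i, G (f i) (f i)‖ = ‖∑ i, (z + (G * a * a) (f i) (f i))‖ := by
        simp_rw [← norm_pow, ← norm_mul, Finset.mul_sum, hdiag]
    _ ≤ ∑ _i : ι, (‖z‖ + ‖G‖ * ‖a‖ ^ 2) :=
        norm_sum_le_of_le _ fun i _ =>
          (norm_add_le _ _).trans (add_le_add_right ((norm_entry_le_l2_opNorm _ _ _).trans hGaa) _)
    _ = Fintype.card ι * (‖z‖ + ‖G‖ * ‖a‖ ^ 2) := by
        rw [Finset.sum_const, Finset.card_univ, nsmul_eq_mul]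

section ResolventOfSmallMatrix

variable [Nonempty p] {a : Matrix p p 𝕜} {z : 𝕜} {b s : ℝ}
  (hb : 1 < b) (hs : 0 < s) (ha : ‖a‖ ≤ 2 * s) (hz : 2 * b * s ≤ ‖z‖)
include hb hs ha hz

theorem isUnit_smul_one_sub_and_l2_opNorm_inv_le_of_norm_le :
    IsUnit (z • 1 - a) ∧ ‖(z • 1 - a)⁻¹‖ ≤ b / (b - 1) * (1 / ‖z‖) := by
  have hz0 : 0 < ‖z‖ := by nlinarith
  have ha' : ‖a‖ ≤ ‖z‖ / b := by rw [le_div_iff₀ (by linarith)]; nlinarith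
  have hlt : ‖a‖ < ‖z‖ := ha'.trans_lt (div_lt_self hz0 hb)
  obtain ⟨hunit, hG⟩ := isUnit_smul_one_sub_and_l2_opNorm_inv_le hlt
  refine ⟨hunit, hG.trans ?_⟩
  calc (‖z‖ - ‖a‖)⁻¹ ≤ (‖z‖ - ‖z‖ / b)⁻¹ := by
        gcongr; exact sub_pos.2 (div_lt_self hz0 hb)
    _ = b / (b - 1) * (1 / ‖z‖) := by field_simp

theorem norm_sum_diag_inv_smul_one_sub_le (hdiag : ∀ i, a i i = 0) (f : ι → p)
    (hι : (Fintype.card ι : ℝ) ≤ s ^ 2) :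
    ‖∑ i, (z • 1 - a)⁻¹ (f i) (f i)‖ ≤ 1 / (4 * b * (b - 1)) * ‖z‖ := by
  obtain ⟨hunit, hG⟩ := isUnit_smul_one_sub_and_l2_opNorm_inv_le_of_norm_le hb hs ha hz
  have hGinv : (z • 1 - a)⁻¹ * (z • 1 - a) = 1 :=
    nonsing_inv_mul _ ((isUnit_iff_isUnit_det _).mp hunit)
  have htr := norm_sum_diag_le_of_mul_smul_one_sub_eq_one hGinv hdiag f
  set r := ‖z‖
  have hr : 0 < r := by nlinarith
  have hsr : s ≤ r / (2 * b) := by rw [le_div_iff₀ (by linarith)]; linarith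
  have hb1 : 0 < b - 1 := by linarith
  refine le_of_mul_le_mul_left (htr.trans ?_) (by positivity : 0 < r ^ 2)
  calc (Fintype.card ι : ℝ) * (r + ‖(z • 1 - a)⁻¹‖ * ‖a‖ ^ 2)
      ≤ s ^ 2 * (r + b / (b - 1) * (1 / r) * (2 * s) ^ 2) := by gcongr
    _ ≤ (r / (2 * b)) ^ 2 * (r + b / (b - 1) * (1 / r) * (2 * (r / (2 * b))) ^ 2) := by gcongr
    _ = r ^ 2 * (1 / (4 * b * (b - 1)) * r) * ((b ^ 2 - b + 1) / b ^ 2) := by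
        field_simp; ring
    _ ≤ r ^ 2 * (1 / (4 * b * (b - 1)) * r) := by
        refine mul_le_of_le_one_right (by positivity) ?_
        rw [div_le_one (by positivity)]; linarith

end ResolventOfSmallMatrix

end Matrix

theorem stmt15_resolvent_bounds_general
    (N n : ℕ) (hN : 0 < N)
    (E : Matrix (Fin N) (Fin n) ℝ)
    (hE : opNorm E ≤ 2 * (Real.sqrt N + Real.sqrt n))
    (b : ℝ) (hb : 2 ≤ b) (z : ℂ)
    (hz : 2 * b * (Real.sqrt N + Real.sqrt n) ≤ ‖z‖) :
    IsUnit (z • (1 : Matrix (Fin N ⊕ Fin n) (Fin N ⊕ Fin n) ℂ) -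
        (dil E).map Complex.ofReal) ∧
    opNormC (resolvC z E) ≤ b / (b - 1) * (1 / ‖z‖) ∧
    (1 - 1 / (4 * b * (b - 1))) * ‖z‖ ≤ ‖phi1C z E‖ ∧
    ‖phi1C z E‖ ≤ (1 + 1 / (4 * b * (b - 1))) * ‖z‖ ∧
    (1 - 1 / (4 * b * (b - 1))) * ‖z‖ ≤ ‖phi2C z E‖ ∧
    ‖phi2C z E‖ ≤ (1 + 1 / (4 * b * (b - 1))) * ‖z‖ := by
  have : Nonempty (Fin N ⊕ Fin n) := ⟨.inl ⟨0, hN⟩⟩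
  set s := √N + √n
  have hb1 : 1 < b := by linarith
  have hs : 0 < s := add_pos_of_pos_of_nonneg (Real.sqrt_pos.2 (mod_cast hN)) (Real.sqrt_nonneg _)
  have ha : ‖(dil E).map Complex.ofReal‖ ≤ 2 * s :=
    (l2_opNorm_map_ofReal_le _).trans ((l2_opNorm_dil_le E).trans hE)
  have hdiag : ∀ i, (dil E).map Complex.ofReal i i = 0 := by rintro (i | i) <;> simp [dil]
  have hcard {k : ℕ} (hk : √k ≤ s) : (Fintype.card (Fin k) : ℝ) ≤ s ^ 2 := by
    rw [Fintype.card_fin, ← Real.sq_sqrt k.cast_nonneg]; gcongr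
  obtain ⟨hunit, hG⟩ := isUnit_smul_one_sub_and_l2_opNorm_inv_le_of_norm_le hb1 hs ha hz
  obtain ⟨hφ₁, hφ₁'⟩ := norm_sub_bounds_of_norm_le_mul
    (norm_sum_diag_inv_smul_one_sub_le hb1 hs ha hz hdiag Sum.inr
      (hcard (le_add_of_nonneg_left (Real.sqrt_nonneg _))))
  obtain ⟨hφ₂, hφ₂'⟩ := norm_sub_bounds_of_norm_le_mul
    (norm_sum_diag_inv_smul_one_sub_le hb1 hs ha hz hdiag Sum.inl
      (hcard (le_add_of_nonneg_right (Real.sqrt_nonneg _))))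
  exact ⟨hunit, hG, hφ₁, hφ₁', hφ₂, hφ₂'⟩

/-- Lemma 21 of the paper: resolvent norm bounds. -/
theorem stmt15_resolvent_bounds
    (N n : ℕ) (hN : 0 < N) (hn : 0 < n)
    (E : Matrix (Fin N) (Fin n) ℝ)
    (hE : opNorm E ≤ 2 * (Real.sqrt N + Real.sqrt n))
    (b : ℝ) (hb : 2 ≤ b) (z : ℂ)
    (hz : 2 * b * (Real.sqrt N + Real.sqrt n) ≤ ‖z‖) :
    IsUnit (z • (1 : Matrix (Fin N ⊕ Fin n) (Fin N ⊕ Fin n) ℂ) -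
        (dil E).map Complex.ofReal) ∧
    opNormC (resolvC z E) ≤ b / (b - 1) * (1 / ‖z‖) ∧
    (1 - 1 / (4 * b * (b - 1))) * ‖z‖ ≤ ‖phi1C z E‖ ∧
    ‖phi1C z E‖ ≤ (1 + 1 / (4 * b * (b - 1))) * ‖z‖ ∧
    (1 - 1 / (4 * b * (b - 1))) * ‖z‖ ≤ ‖phi2C z E‖ ∧
    ‖phi2C z E‖ ≤ (1 + 1 / (4 * b * (b - 1))) * ‖z‖ :=
  stmt15_resolvent_bounds_general N n hN E hE b hb z hz
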